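/- arXiv:1909.09915 — 2 statements merged into one kernel-verified Lean document; each statement's English description precedes it below -/
import Mathlib

section
/- Let ω ∈ ℝ^d satisfy the Diophantine condition |k·ω| ≥ γ|k|^{−τ} for all nonzero k ∈ ℤ^d, with 0 < γ and d−1 < τ < m. If f ∈ H^m(𝕋^d) has zero average, then there is a unique zero-average solution V ∈ H^{m−τ}(𝕋^d) of ω·∂_θ V = f, and ‖V‖_{H^{m−τ}} ≤ γ^{−1} ‖f‖_{H^m}. -/
open scoped BigOperators

/-- Euclidean norm of a lattice vector `k ∈ ℤ^d`. -/
noncomputable def knorm (d : ℕ) (k : Fin d → ℤ) : ℝ :=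
  Real.sqrt (∑ j, ((k j : ℝ))^2)

/-- Fourier-side weight for the Sobolev space `H^m(𝕋^d)`: `(1+|k|²)^m`. -/
noncomputable def swt (d : ℕ) (m : ℝ) (k : Fin d → ℤ) : ℝ :=
  (1 + (knorm d k)^2) ^ m

lemma knorm_nonneg (d : ℕ) (k : Fin d → ℤ) : 0 ≤ knorm d k := Real.sqrt_nonneg _

lemma one_le_knorm {d : ℕ} {k : Fin d → ℤ} (hk : k ≠ 0) : 1 ≤ knorm d k := by
  obtain ⟨j, hj⟩ : ∃ j, k j ≠ 0 := by
    by_contra h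
    push_neg at h
    exact hk (funext h)
  have h1 : (1:ℝ) ≤ ((k j : ℝ))^2 := by
    have : (1:ℤ) ≤ (k j)^2 := by
      rcases hj.lt_or_gt with h|h <;> nlinarith
    exact_mod_cast (by exact_mod_cast this : (1:ℝ) ≤ ((k j)^2 : ℤ))
  have h2 : ((k j : ℝ))^2 ≤ ∑ i, ((k i : ℝ))^2 :=
    Finset.single_le_sum (f := fun i => ((k i : ℝ))^2) (fun i _ => sq_nonneg _)
      (Finset.mem_univ j)
  rw [knorm, show (1:ℝ) = Real.sqrt 1 by simp]
  exact Real.sqrt_le_sqrt (by linarith)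

lemma tau_nonneg {d : ℕ} {τ : ℝ} (hτ : (d:ℝ) - 1 < τ) {k : Fin d → ℤ} (hk : k ≠ 0) :
    0 ≤ τ := by
  rcases Nat.eq_zero_or_pos d with h|h
  · subst h
    exact absurd (Subsingleton.elim k 0) hk
  · have : (1:ℝ) ≤ d := by exact_mod_cast h
    linarith

/-- Cohomology equation under the standard Diophantine condition
`|k·ω| ≥ γ |k|^{-τ}` with `d-1 < τ < m`: for zero-average `f ∈ H^m(𝕋^d)`
there is a unique zero-average solution `V ∈ H^{m-τ}` of `ω·∂_θ V = f`,
with `‖V‖_{H^{m-τ}} ≤ γ⁻¹ ‖f‖_{H^m}` (expressed on Fourier coefficients). -/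
theorem stmt6 (d : ℕ) (γ τ m : ℝ) (hγ : 0 < γ) (hτ : (d : ℝ) - 1 < τ)
    (hτm : τ < m) (ω : Fin d → ℝ)
    (hω : ∀ k : Fin d → ℤ, k ≠ 0 →
      γ * (knorm d k) ^ (-τ) ≤ |∑ j, (k j : ℝ) * ω j|)
    (f : (Fin d → ℤ) → ℂ) (hf0 : f 0 = 0)
    (hf : Summable (fun k : Fin d → ℤ => swt d m k * ‖f k‖^2)) :
    (∃! V : (Fin d → ℤ) → ℂ, V 0 = 0 ∧
      ∀ k : Fin d → ℤ, Complex.I * (∑ j, (k j : ℝ) * ω j) * V k = f k) ∧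
    (∀ V : (Fin d → ℤ) → ℂ,
      (V 0 = 0 ∧
        ∀ k : Fin d → ℤ, Complex.I * (∑ j, (k j : ℝ) * ω j) * V k = f k) →
      Summable (fun k : Fin d → ℤ => swt d (m - τ) k * ‖V k‖^2) ∧
      Real.sqrt (∑' k : Fin d → ℤ, swt d (m - τ) k * ‖V k‖^2)
        ≤ γ⁻¹ * Real.sqrt (∑' k : Fin d → ℤ, swt d m k * ‖f k‖^2)) := by
  -- notation for the frequency
  set c : (Fin d → ℤ) → ℝ := fun k => ∑ j, (k j : ℝ) * ω j with hc
  have hcne : ∀ k : Fin d → ℤ, k ≠ 0 → c k ≠ 0 := by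
    intro k hk
    have h1 := hω k hk
    have h2 : 0 < γ * (knorm d k) ^ (-τ) := by
      have := one_le_knorm hk
      positivity
    intro h
    rw [hc] at h
    simp only [h, abs_zero] at h1
    -- h1 : γ * _ ≤ 0
    have := h1
    simp only [hc] at *
    linarith [h1, h2]
  have hIcne : ∀ k : Fin d → ℤ, k ≠ 0 → Complex.I * (c k : ℂ) ≠ 0 := by
    intro k hk
    simp [Complex.I_ne_zero, Complex.ofReal_ne_zero, hcne k hk]
  have hc0 : c 0 = 0 := by simp [hc]
  refine ⟨?_, ?_⟩
  · -- existence and uniqueness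
    refine ⟨fun k => if k = 0 then 0 else f k / (Complex.I * (c k : ℂ)), ⟨by simp, ?_⟩, ?_⟩
    · intro k
      by_cases hk : k = 0
      · subst hk
        simp [hc0, hf0]
      · simp only [if_neg hk]
        rw [mul_comm, div_mul_cancel₀ _ (hIcne k hk)]
    · rintro W ⟨hW0, hWk⟩
      funext k
      by_cases hk : k = 0
      · subst hk; simpa using hW0
      · simp only [if_neg hk]
        rw [eq_div_iff (hIcne k hk), ← hWk k]
        ring
  · rintro V ⟨hV0, hVk⟩
    -- key termwise estimate
    have key : ∀ k : Fin d → ℤ,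
        swt d (m - τ) k * ‖V k‖^2 ≤ γ⁻¹^2 * (swt d m k * ‖f k‖^2) := by
      intro k
      by_cases hk : k = 0
      · subst hk
        simp only [hV0, norm_zero]
        have : (0:ℝ) ≤ γ⁻¹^2 * (swt d m 0 * ‖f 0‖^2) := by
          have : (0:ℝ) ≤ swt d m 0 := by
            unfold swt
            positivity
          positivity
        simpa using this
      · have hκ1 : 1 ≤ knorm d k := one_le_knorm hk
        have hκ0 : 0 < knorm d k := lt_of_lt_of_le one_pos hκ1
        have hτ0 : 0 ≤ τ := tau_nonneg hτ hk
        have hlow : γ * (knorm d k) ^ (-τ) ≤ |c k| := hω k hk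
        have hlowpos : 0 < γ * (knorm d k) ^ (-τ) := by positivity
        -- ‖f k‖ = |c k| * ‖V k‖
        have hnorm : ‖f k‖ = |c k| * ‖V k‖ := by
          rw [← hVk k, norm_mul, norm_mul, Complex.norm_I, one_mul,
            Complex.norm_real, Real.norm_eq_abs]
        -- bound on ‖V k‖
        have hVbound : ‖V k‖ ≤ γ⁻¹ * (knorm d k) ^ τ * ‖f k‖ := by
          have hcabs : 0 < |c k| := lt_of_lt_of_le hlowpos hlow
          rw [hnorm]
          have h1 : γ⁻¹ * (knorm d k) ^ τ * (|c k| * ‖V k‖) =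
              (γ⁻¹ * (knorm d k) ^ τ * |c k|) * ‖V k‖ := by ring
          rw [h1]
          have h2 : 1 ≤ γ⁻¹ * (knorm d k) ^ τ * |c k| := by
            have h3 : γ * (knorm d k) ^ (-τ) * (γ⁻¹ * (knorm d k) ^ τ) = 1 := by
              rw [show γ * (knorm d k) ^ (-τ) * (γ⁻¹ * (knorm d k) ^ τ)
                  = (γ * γ⁻¹) * ((knorm d k) ^ (-τ) * (knorm d k) ^ τ) by ring,
                ← Real.rpow_add hκ0, mul_inv_cancel₀ hγ.ne']
              simp
            calc (1:ℝ) = γ * (knorm d k) ^ (-τ) * (γ⁻¹ * (knorm d k) ^ τ) := h3.symm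
              _ ≤ |c k| * (γ⁻¹ * (knorm d k) ^ τ) := by
                  apply mul_le_mul_of_nonneg_right hlow
                  positivity
              _ = γ⁻¹ * (knorm d k) ^ τ * |c k| := by ring
          nlinarith [norm_nonneg (V k), h2]
        -- weight comparison: swt (m-τ) * κ^(2τ) ≤ swt m
        have hwt : swt d (m - τ) k * ((knorm d k) ^ τ)^2 ≤ swt d m k := by
          unfold swt
          have hb : (0:ℝ) < 1 + (knorm d k)^2 := by positivity
          have e1 : ((knorm d k) ^ τ)^2 = knorm d k ^ (τ * 2) := by
            rw [← Real.rpow_natCast ((knorm d k) ^ τ) 2, ← Real.rpow_mul hκ0.le]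
            norm_num
          have e2 : ((knorm d k)^2) ^ τ = knorm d k ^ (τ * 2) := by
            rw [← Real.rpow_natCast (knorm d k) 2, ← Real.rpow_mul hκ0.le]
            ring_nf
          have h1 : ((knorm d k) ^ τ)^2 = ((knorm d k)^2) ^ τ := e1.trans e2.symm
          rw [h1]
          have h2 : ((knorm d k)^2) ^ τ ≤ (1 + (knorm d k)^2) ^ τ :=
            Real.rpow_le_rpow (by positivity) (by linarith) hτ0
          calc (1 + knorm d k ^ 2) ^ (m - τ) * (knorm d k ^ 2) ^ τ
              ≤ (1 + knorm d k ^ 2) ^ (m - τ) * (1 + knorm d k ^ 2) ^ τ := by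
                apply mul_le_mul_of_nonneg_left h2 (by positivity)
            _ = (1 + knorm d k ^ 2) ^ m := by
                rw [← Real.rpow_add hb]; ring_nf
        have hswtnn : 0 ≤ swt d (m - τ) k := by unfold swt; positivity
        calc swt d (m - τ) k * ‖V k‖^2
            ≤ swt d (m - τ) k * (γ⁻¹ * (knorm d k) ^ τ * ‖f k‖)^2 := by
              apply mul_le_mul_of_nonneg_left _ hswtnn
              exact pow_le_pow_left₀ (norm_nonneg _) hVbound 2
          _ = γ⁻¹^2 * ((swt d (m - τ) k * ((knorm d k) ^ τ)^2) * ‖f k‖^2) := by ring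
          _ ≤ γ⁻¹^2 * (swt d m k * ‖f k‖^2) := by
              apply mul_le_mul_of_nonneg_left _ (by positivity)
              exact mul_le_mul_of_nonneg_right hwt (by positivity)
    have hsum : Summable (fun k : Fin d → ℤ => swt d (m - τ) k * ‖V k‖^2) := by
      apply Summable.of_nonneg_of_le (fun k => ?_) key (hf.mul_left _)
      have : 0 ≤ swt d (m - τ) k := by unfold swt; positivity
      positivity
    refine ⟨hsum, ?_⟩
    have hts : (∑' k : Fin d → ℤ, swt d (m - τ) k * ‖V k‖^2)
        ≤ γ⁻¹^2 * ∑' k : Fin d → ℤ, swt d m k * ‖f k‖^2 := by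
      rw [← tsum_mul_left]
      exact Summable.tsum_le_tsum key hsum (hf.mul_left _)
    calc Real.sqrt (∑' k : Fin d → ℤ, swt d (m - τ) k * ‖V k‖^2)
        ≤ Real.sqrt (γ⁻¹^2 * ∑' k : Fin d → ℤ, swt d m k * ‖f k‖^2) :=
          Real.sqrt_le_sqrt hts
      _ = γ⁻¹ * Real.sqrt (∑' k : Fin d → ℤ, swt d m k * ‖f k‖^2) := by
          rw [Real.sqrt_mul (sq_nonneg _), Real.sqrt_sq (by positivity)]
end

section
/- Let C > 0 and consider the region Ω_C = {ε ∈ ℂ \ {0} : |Im ε| ≤ C|Re ε|}. Let l ≥ 2, c > 0, and let a(ε) be a branch of (−cε)^{1/l} on a sector of Ω_C. Then there exists a constant K > 0 (depending on C, c, l) such that dist(l a(ε)^{l−1}, iℝ) ≥ K |ε|^{1−1/l} for all ε in that sector. -/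
/-! With `z = -cε`, the hypotheses put `z` in the sector `|arg z| ≤ arctan C`, and
`a(ε)^(l-1) = exp((1 - 1/l) log z)` has modulus `(c‖ε‖)^(1 - 1/l)` and argument
`(1 - 1/l) arg z`, which stays in the same sector. Its real part is therefore at least
`cos (arctan C) = 1 / √(1 + C²)` times its modulus. -/

open Real in
lemma Real.inv_sqrt_one_add_sq_le_cos {x C : ℝ} (hx : |x| ≤ arctan C) :
    (√(1 + C ^ 2))⁻¹ ≤ cos x := by
  rw [← one_div, ← cos_arctan, ← cos_abs x]
  exact cos_le_cos_of_nonneg_of_le_pi (abs_nonneg x)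
    (by linarith [pi_pos, arctan_lt_pi_div_two C]) hx

namespace Complex

lemma abs_arg_le_arctan {z : ℂ} {C : ℝ} (hre : 0 < z.re) (him : |z.im| ≤ C * z.re) :
    |arg z| ≤ Real.arctan C := by
  have harg := abs_lt.1 (abs_arg_lt_pi_div_two_iff.2 (Or.inl hre))
  have hslope := abs_le.1 <| (abs_div z.im z.re ▸ abs_of_pos hre ▸ (div_le_iff₀ hre).2 him)
  rw [← Real.arctan_tan harg.1 harg.2, tan_arg, abs_le, ← Real.arctan_neg]
  exact ⟨Real.arctan_strictMono.monotone hslope.1, Real.arctan_strictMono.monotone hslope.2⟩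

lemma re_exp_ofReal_mul_log (t : ℝ) {z : ℂ} (hz : z ≠ 0) :
    (exp (t * log z)).re = ‖z‖ ^ t * Real.cos (t * arg z) := by
  rw [exp_re, re_ofReal_mul, im_ofReal_mul, log_re, log_im,
    Real.rpow_def_of_pos (norm_pos_iff.2 hz), mul_comm t]

lemma norm_rpow_div_le_re_exp_ofReal_mul_log {z : ℂ} {C t : ℝ} (hre : 0 < z.re)
    (him : |z.im| ≤ C * z.re) (ht₀ : 0 ≤ t) (ht₁ : t ≤ 1) :
    ‖z‖ ^ t / √(1 + C ^ 2) ≤ (exp (t * log z)).re := by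
  have hz : z ≠ 0 := fun h ↦ by simp [h] at hre
  have harg : |t * arg z| ≤ Real.arctan C := by
    rw [abs_mul, abs_of_nonneg ht₀]
    exact (mul_le_of_le_one_left (abs_nonneg _) ht₁).trans (abs_arg_le_arctan hre him)
  rw [re_exp_ofReal_mul_log t hz, div_eq_mul_inv]
  exact mul_le_mul_of_nonneg_left (Real.inv_sqrt_one_add_sq_le_cos harg) (by positivity)

lemma exp_log_div_pow_pred {n : ℕ} (hn : n ≠ 0) (z : ℂ) :
    exp (log z / n) ^ (n - 1) = exp (((1 - 1 / n : ℝ) : ℂ) * log z) := by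
  rw [← exp_nat_mul, Nat.cast_pred (Nat.pos_of_ne_zero hn)]
  congr 1
  push_cast
  field_simp

end Complex

theorem stmt14_general (l : ℕ) (hl : 2 ≤ l) (c C : ℝ) (hc : 0 < c) :
    ∃ K : ℝ, 0 < K ∧
      ∀ ε : ℂ, ε ≠ 0 → ε.re < 0 → |ε.im| ≤ C * |ε.re| →
        K * ‖ε‖ ^ ((1 : ℝ) - 1 / l)
          ≤ |((l : ℂ) * (Complex.exp (Complex.log (-(c : ℂ) * ε) / l))
              ^ (l - 1)).re| := by
  set p : ℝ := 1 - 1 / l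
  have hl₀ : (0 : ℝ) < l := by positivity
  have hp₀ : 0 ≤ p := sub_nonneg.2 <| (div_le_one hl₀).2 (by exact_mod_cast (by omega : 1 ≤ l))
  have hp₁ : p ≤ 1 := sub_le_self _ (by positivity)
  refine ⟨l * c ^ p / √(1 + C ^ 2), by positivity, fun ε _ hre him ↦ ?_⟩
  set z : ℂ := -(c : ℂ) * ε
  have hzre : z.re = c * -ε.re := by simp [z]
  have hzim : |z.im| ≤ C * z.re := by
    rw [hzre, show z.im = -(c * ε.im) by simp [z], abs_neg, abs_mul, abs_of_pos hc,
      ← abs_of_neg hre]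
    nlinarith
  have hnorm : ‖z‖ = c * ‖ε‖ := by simp [z, abs_of_pos hc]
  have hsector :=
    Complex.norm_rpow_div_le_re_exp_ofReal_mul_log (by rw [hzre]; nlinarith) hzim hp₀ hp₁
  rw [Complex.exp_log_div_pow_pred (by omega), ← Complex.ofReal_natCast, Complex.re_ofReal_mul]
  calc l * c ^ p / √(1 + C ^ 2) * ‖ε‖ ^ p = l * (‖z‖ ^ p / √(1 + C ^ 2)) := by
        rw [hnorm, Real.mul_rpow hc.le (norm_nonneg ε)]; ring
    _ ≤ l * (Complex.exp (p * Complex.log z)).re := by gcongr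
    _ ≤ _ := le_abs_self _

/-- Quantitative non-degeneracy of the twist coefficient for complex `ε`:
for `l ≥ 2`, `c > 0`, `C > 0`, on a sector of the region
`Ω_C = {ε ≠ 0 : |Im ε| ≤ C |Re ε|}` (here the sector `Re ε < 0`), the branch
`a(ε) = exp(log(-cε)/l)` of `(-cε)^{1/l}` satisfies
`dist(l a(ε)^{l-1}, iℝ) = |Re(l a(ε)^{l-1})| ≥ K |ε|^{1-1/l}` for some
`K = K(C,c,l) > 0`. -/
theorem stmt14 (l : ℕ) (hl : 2 ≤ l) (c C : ℝ) (hc : 0 < c) (hC : 0 < C) :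
    ∃ K : ℝ, 0 < K ∧
      ∀ ε : ℂ, ε ≠ 0 → ε.re < 0 → |ε.im| ≤ C * |ε.re| →
        K * ‖ε‖ ^ ((1 : ℝ) - 1 / l)
          ≤ |((l : ℂ) * (Complex.exp (Complex.log (-(c : ℂ) * ε) / l))
              ^ (l - 1)).re| :=
  stmt14_general l hl c C hc
end
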